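/- Let E be a real inner product space, θ ∈ [0, π/2), γ₁ ∈ E a unit vector, and γ₂, γ₃ ∈ E with ⟨γ₂, γ₁⟩ < 0, ⟨γ₃, γ₁⟩ < 0, and ⟨γ₂, γ₃⟩ < 0. Set N = (cos θ · γ₁, sin θ) ∈ E × ℝ and π*(v) = (v, 0) − cos θ · ⟨v, γ₁⟩ · N. Then ⟨π*(γ₂), π*(γ₃)⟩ ≤ ⟨γ₂, γ₃⟩ < 0. (That is, acute dihedral angles are preserved by the doubling construction: if the faces normal to γ₂ and γ₃ meet the doubled face at acute angles and meet each other at an acute angle, then their lifts to the doubled manifold still meet at an acute angle.) -/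

import Mathlib

/-! Since `N` is a unit vector and `⟪(v,0), N⟫ = cos θ · ⟪v, γ₁⟫`, the map `π*` is the orthogonal
projection of `(v,0)` onto `N⊥`. Hence `⟪π* v, π* w⟫ = ⟪v, w⟫ - cos² θ · ⟪v, γ₁⟫ ⟪w, γ₁⟫`, and the
correction term is nonnegative when `⟪v, γ₁⟫` and `⟪w, γ₁⟫` have the same sign. -/

open scoped RealInnerProductSpace

/-- The vector `N = (cos θ · γ₁, sin θ) ∈ E × ℝ`. -/
noncomputable def Nvec {E : Type*} [NormedAddCommGroup E] [InnerProductSpace ℝ E]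
    (θ : ℝ) (γ₁ : E) : WithLp 2 (E × ℝ) :=
  (WithLp.equiv 2 (E × ℝ)).symm (Real.cos θ • γ₁, Real.sin θ)

/-- The map `π*(v) = (v,0) − cos θ · ⟨v, γ₁⟩ · N`. -/
noncomputable def piStar {E : Type*} [NormedAddCommGroup E] [InnerProductSpace ℝ E]
    (θ : ℝ) (γ₁ : E) (v : E) : WithLp 2 (E × ℝ) :=
  (WithLp.equiv 2 (E × ℝ)).symm (v, 0) - (Real.cos θ * ⟪v, γ₁⟫) • Nvec θ γ₁

theorem inner_sub_inner_smul_sub_inner_smul {F : Type*} [NormedAddCommGroup F]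
    [InnerProductSpace ℝ F] {n : F} (hn : ‖n‖ = 1) (x y : F) :
    ⟪x - ⟪x, n⟫ • n, y - ⟪y, n⟫ • n⟫ = ⟪x, y⟫ - ⟪x, n⟫ * ⟪y, n⟫ := by
  have hnn : ⟪n, n⟫ = 1 := by rw [real_inner_self_eq_norm_sq, hn, one_pow]
  simp only [inner_sub_left, inner_sub_right, real_inner_smul_left, real_inner_smul_right,
    hnn, real_inner_comm n]
  ring

section Doubling

variable {E : Type*} [NormedAddCommGroup E] [InnerProductSpace ℝ E]

theorem norm_Nvec (θ : ℝ) {γ₁ : E} (hγ₁ : ‖γ₁‖ = 1) : ‖Nvec θ γ₁‖ = 1 := by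
  rw [← pow_eq_one_iff_of_nonneg (norm_nonneg _) two_ne_zero, ← real_inner_self_eq_norm_sq]
  simp only [Nvec, WithLp.equiv_symm_apply, WithLp.prod_inner_apply, real_inner_self_eq_norm_sq,
    norm_smul, hγ₁, mul_one, Real.norm_eq_abs, sq_abs, Real.cos_sq_add_sin_sq]

theorem inner_toLp_Nvec (θ : ℝ) (γ₁ v : E) :
    ⟪WithLp.toLp 2 (v, (0 : ℝ)), Nvec θ γ₁⟫ = Real.cos θ * ⟪v, γ₁⟫ := by
  simp [Nvec, WithLp.prod_inner_apply, real_inner_smul_right, mul_comm]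

theorem piStar_eq (θ : ℝ) (γ₁ v : E) :
    piStar θ γ₁ v = WithLp.toLp 2 (v, (0 : ℝ))
      - ⟪WithLp.toLp 2 (v, (0 : ℝ)), Nvec θ γ₁⟫ • Nvec θ γ₁ := by
  rw [inner_toLp_Nvec]; rfl

theorem inner_piStar {θ : ℝ} {γ₁ : E} (hγ₁ : ‖γ₁‖ = 1) (v w : E) :
    ⟪piStar θ γ₁ v, piStar θ γ₁ w⟫ = ⟪v, w⟫ - Real.cos θ ^ 2 * (⟪v, γ₁⟫ * ⟪w, γ₁⟫) := by
  rw [piStar_eq, piStar_eq, inner_sub_inner_smul_sub_inner_smul (norm_Nvec θ hγ₁),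
    inner_toLp_Nvec, inner_toLp_Nvec, WithLp.prod_inner_apply, inner_zero_left, add_zero]
  ring

theorem inner_piStar_le {θ : ℝ} {γ₁ : E} (hγ₁ : ‖γ₁‖ = 1) {v w : E}
    (hvw : 0 ≤ ⟪v, γ₁⟫ * ⟪w, γ₁⟫) : ⟪piStar θ γ₁ v, piStar θ γ₁ w⟫ ≤ ⟪v, w⟫ := by
  rw [inner_piStar hγ₁]
  exact sub_le_self _ (mul_nonneg (sq_nonneg _) hvw)

end Doubling

theorem stmt11_general {E : Type*} [NormedAddCommGroup E] [InnerProductSpace ℝ E]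
    (θ : ℝ) (γ₁ : E) (hγ₁ : ‖γ₁‖ = 1) (γ₂ γ₃ : E)
    (h21 : ⟪γ₂, γ₁⟫ < 0) (h31 : ⟪γ₃, γ₁⟫ < 0) (h23 : ⟪γ₂, γ₃⟫ < 0) :
    ⟪piStar θ γ₁ γ₂, piStar θ γ₁ γ₃⟫ ≤ ⟪γ₂, γ₃⟫ ∧ ⟪γ₂, γ₃⟫ < 0 :=
  ⟨inner_piStar_le hγ₁ (mul_nonneg_of_nonpos_of_nonpos h21.le h31.le), h23⟩

/-- Acute dihedral angles are preserved by the doubling construction: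
if `⟨γ₂, γ₁⟩ < 0`, `⟨γ₃, γ₁⟩ < 0` and `⟨γ₂, γ₃⟩ < 0`, then
`⟨π*(γ₂), π*(γ₃)⟩ ≤ ⟨γ₂, γ₃⟩ < 0`. -/
theorem stmt11 {E : Type*} [NormedAddCommGroup E] [InnerProductSpace ℝ E]
    (θ : ℝ) (hθ : θ ∈ Set.Ico 0 (Real.pi / 2)) (γ₁ : E) (hγ₁ : ‖γ₁‖ = 1) (γ₂ γ₃ : E)
    (h21 : ⟪γ₂, γ₁⟫ < 0) (h31 : ⟪γ₃, γ₁⟫ < 0) (h23 : ⟪γ₂, γ₃⟫ < 0) :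
    ⟪piStar θ γ₁ γ₂, piStar θ γ₁ γ₃⟫ ≤ ⟪γ₂, γ₃⟫ ∧ ⟪γ₂, γ₃⟫ < 0 :=
  stmt11_general θ γ₁ hγ₁ γ₂ γ₃ h21 h31 h23
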